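/- Let r > 1 and C ≥ 1 be real numbers, let η, ε ∈ (0,1), let q ∈ ℕ be sufficiently large, let N ≥ 2, let I := (N/e, N], and let δ ∈ (((10·C·r·log log q)/(ε·log q))^{1/r}, 1/10). Let f : [I]_q → ℝ_{≥0} satisfy: (A1) there exists ν : [I]_q → ℝ_{≥0} with f(n) ≤ ν(n) for all n ∈ [I]_q, |𝔼_{n∈[I]_q} ν(n) − 1| ≤ η, and |𝔼_{n∈[I]_q} ν(n)·conj(χ)(n)| ≤ q^{−ε} for every non-principal Dirichlet character χ (mod q); (A2) there are at most C·δ^{−r} Dirichlet characters χ (mod q) with |𝔼_{n∈[I]_q} f(n)·conj(χ)(n)| ≥ δ. Then there exist a function g : (ℤ/qℤ)^× → ℝ_{≥0} and a constant C' depending only on r and C such that: (i) 0 ≤ g(a) ≤ 1 + η + C'·q^{−ε/2} for every a ∈ (ℤ/qℤ)^×; (ii) |𝔼_{n∈[I]_q} f(n)·conj(χ)(n) − 𝔼_{a∈(ℤ/qℤ)^×} g(a)·conj(χ)(a)| ≤ δ for every χ (mod q); (iii) |𝔼_{a} g(a)·conj(χ)(a)| ≤ |𝔼_{n∈[I]_q}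 f(n)·conj(χ)(n)| and |𝔼_{n∈[I]_q} f(n)·conj(χ)(n) − 𝔼_{a} g(a)·conj(χ)(a)| ≤ |𝔼_{n∈[I]_q} f(n)·conj(χ)(n)| for every χ (mod q); (iv) 𝔼_{a∈(ℤ/qℤ)^×} g(a) = 𝔼_{n∈[I]_q} f(n); (v) for every subgroup H ≤ (ℤ/qℤ)^× of index 2 and every b ∈ (ℤ/qℤ)^×, |𝔼_{n∈[I]_q} f(n)·1[n mod q ∈ bH] − 𝔼_{a∈(ℤ/qℤ)^×} g(a)·1[a ∈ bH]| ≤ C'·δ. -/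

import Mathlib

open scoped BigOperators Classical

noncomputable section

/-- `[I]_q` for `I = (N/e, N]`: the naturals in `(N/e, N]` coprime to `q`. -/
def Iqset (q : ℕ) (N : ℝ) : Finset ℕ :=
  (Finset.range (⌊N⌋₊ + 1)).filter fun n : ℕ => N / Real.exp 1 < (n : ℝ) ∧ Nat.Coprime n q

/-- `𝔼_{n ∈ [I]_q} f(n) · conj(χ)(n)`. -/
def Favg (q : ℕ) (N : ℝ) (f : ℕ → ℝ) (χ : DirichletCharacter ℂ q) : ℂ :=
  (∑ n ∈ Iqset q N, (f n : ℂ) * (starRingEnd ℂ) (χ (n : ZMod q))) / ((Iqset q N).card : ℂ)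

/-- `𝔼_{n ∈ [I]_q} f(n)`. -/
def FavgReal (q : ℕ) (N : ℝ) (f : ℕ → ℝ) : ℝ :=
  (∑ n ∈ Iqset q N, f n) / ((Iqset q N).card : ℝ)

/-- `𝔼_{a ∈ (ℤ/qℤ)ˣ} g(a) · conj(χ)(a)`. -/
def Gavg (q : ℕ) [NeZero q] (g : (ZMod q)ˣ → ℝ) (χ : DirichletCharacter ℂ q) : ℂ :=
  (∑ a : (ZMod q)ˣ, (g a : ℂ) * (starRingEnd ℂ) (χ ((a : (ZMod q)ˣ) : ZMod q))) /
    (Fintype.card ((ZMod q)ˣ) : ℂ)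

/-- `𝔼_{a ∈ (ℤ/qℤ)ˣ} g(a)`. -/
def GavgReal (q : ℕ) [NeZero q] (g : (ZMod q)ˣ → ℝ) : ℝ :=
  (∑ a : (ZMod q)ˣ, g a) / (Fintype.card ((ZMod q)ˣ) : ℝ)

/-- Indicator that the residue of an integer `n` lies in the coset `bH ⊆ (ℤ/qℤ)ˣ`. -/
def cosetIndNat (q : ℕ) (H : Subgroup ((ZMod q)ˣ)) (b : (ZMod q)ˣ) (n : ℕ) : ℝ :=
  if ∃ u : (ZMod q)ˣ, ((u : ZMod q) = (n : ZMod q)) ∧ b⁻¹ * u ∈ H then 1 else 0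

/-- Indicator that a unit `a` lies in the coset `bH`. -/
def cosetInd (q : ℕ) (H : Subgroup ((ZMod q)ˣ)) (b a : (ZMod q)ˣ) : ℝ :=
  if b⁻¹ * a ∈ H then 1 else 0

/-!
Everything is transported to the unit group `G = (ℤ/qℤ)ˣ`: pushing `f` and `ν` forward along
`n ↦ n mod q`, with the normalisation that preserves averages, changes none of the quantities in
the statement. Let `S = {χ : ‖f̂(χ)‖ ≥ δ}` be the large spectrum, `B` the Bohr set of the
`χ ∈ S` with radius `δ/4`, and `μ_B` the indicator of `B` normalised to have mean one. The model
is `g = f ∗ K` for the Fejér-type kernel `K = μ̃_B ∗ μ_B ≥ 0`, so `ĝ = |μ̂_B|² f̂`, and the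
multiplier `|μ̂_B|²` lies in `[0, 1]`, is `1` at the trivial character and at least `1 - δ/2` on
`S`; this gives (ii)–(iv). The indicator of a coset of an index-two subgroup is a combination of
the trivial character and one real character, so (v) follows from (ii).

For (i), `g ≤ ν ∗ K`, and the Fourier expansion of `ν ∗ K` is at most
`1 + η + q^(-ε) ∑ |μ̂_B|² = 1 + η + q^(-ε) |G| / |B|` by Parseval. Cutting the circle into arcs of
length `δ/4` and sorting the units by the arcs containing `χ(a)`, `χ ∈ S`, shows
`|G| / |B| ≤ (2⌈4π/δ⌉ + 1)^|S|`, which the lower bound on `δ` and (A2) make at most `q^(ε/2)`.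
-/

open Finset ComplexConjugate

lemma Complex.norm_sub_le_abs_arg_sub {z w : ℂ} (hz : ‖z‖ = 1) (hw : ‖w‖ = 1) :
    ‖z - w‖ ≤ |z.arg - w.arg| := by
  have hexp {x : ℂ} (hx : ‖x‖ = 1) : Complex.exp (x.arg * Complex.I) = x := by
    simpa [hx] using Complex.norm_mul_exp_arg_mul_I x
  calc ‖z - w‖ = ‖Complex.exp (z.arg * Complex.I) - Complex.exp (w.arg * Complex.I)‖ := by
        rw [hexp hz, hexp hw]
    _ = ‖Complex.exp (w.arg * Complex.I) * (Complex.exp (Complex.I * ↑(z.arg - w.arg)) - 1)‖ := by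
        rw [mul_sub, mul_one, ← Complex.exp_add]
        congr 3
        push_cast
        ring
    _ ≤ |z.arg - w.arg| := by
        rw [norm_mul, hexp hw, hw, one_mul, ← Real.norm_eq_abs]
        exact Real.norm_exp_I_mul_ofReal_sub_one_le

namespace DirichletCharacter

lemma conj_apply_unit {q : ℕ} (χ : DirichletCharacter ℂ q) (u : (ZMod q)ˣ) :
    conj (χ u) = χ ↑u⁻¹ := by
  rw [← RCLike.star_def, MulChar.star_apply', MulChar.inv_apply, Ring.inverse_unit]

lemma sum_apply_mul_conj_apply {q : ℕ} [NeZero q] (a c : (ZMod q)ˣ) :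
    ∑ χ : DirichletCharacter ℂ q, χ a * conj (χ c) =
      if a = c then (Fintype.card (ZMod q)ˣ : ℂ) else 0 := by
  simp_rw [conj_apply_unit, ← map_mul, ← Units.val_mul, sum_characters_eq,
    ZMod.card_units_eq_totient, Units.val_eq_one, mul_inv_eq_one]

end DirichletCharacter

variable {q : ℕ}

def indexTwoCharacter (H : Subgroup (ZMod q)ˣ) (hH : H.index = 2) : DirichletCharacter ℂ q :=
  MulChar.ofUnitHom
    { toFun := fun a => if a ∈ H then 1 else -1
      map_one' := if_pos H.one_mem
      map_mul' := fun a b => by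
        by_cases ha : a ∈ H <;> by_cases hb : b ∈ H <;>
          simp [Subgroup.mul_mem_iff_of_index_two hH, ha, hb] }

lemma cosetInd_eq {H : Subgroup (ZMod q)ˣ} (hH : H.index = 2) (b a : (ZMod q)ˣ) :
    (cosetInd q H b a : ℂ) =
      (1 + indexTwoCharacter H hH b * conj (indexTwoCharacter H hH a)) / 2 := by
  simp only [cosetInd, indexTwoCharacter, MulChar.ofUnitHom_coe, MonoidHom.coe_mk, OneHom.coe_mk,
    Subgroup.mul_mem_iff_of_index_two hH, inv_mem_iff]
  by_cases ha : a ∈ H <;> by_cases hb : b ∈ H <;> simp [ha, hb]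

-- The value `1` off the units is junk: only `n ∈ Iqset q N`, which are coprime to `q`, are used.
def residueUnit (q n : ℕ) : (ZMod q)ˣ :=
  if h : n.Coprime q then ZMod.unitOfCoprime n h else 1

lemma residueUnit_of_mem_Iqset {N : ℝ} {n : ℕ} (hn : n ∈ Iqset q N) :
    (residueUnit q n : ZMod q) = n := by
  rw [residueUnit, dif_pos (mem_filter.mp hn).2.2, ZMod.coe_unitOfCoprime]

variable [NeZero q]

lemma card_units_pos : (0 : ℝ) < Fintype.card (ZMod q)ˣ := by
  exact_mod_cast Fintype.card_pos

lemma Gavg_one (h : (ZMod q)ˣ → ℝ) : Gavg q h 1 = GavgReal q h := by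
  simp [Gavg, GavgReal]

lemma Gavg_sub (u v : (ZMod q)ˣ → ℝ) (χ : DirichletCharacter ℂ q) :
    Gavg q (u - v) χ = Gavg q u χ - Gavg q v χ := by
  simp only [Gavg, Pi.sub_apply, Complex.ofReal_sub, sub_mul, sum_sub_distrib, sub_div]

lemma norm_Gavg_le {h : (ZMod q)ˣ → ℝ} (hh : 0 ≤ h) (χ : DirichletCharacter ℂ q) :
    ‖Gavg q h χ‖ ≤ GavgReal q h := by
  rw [Gavg, GavgReal, norm_div, Complex.norm_natCast]
  gcongr
  refine (norm_sum_le _ _).trans (sum_le_sum fun a _ => ?_)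
  rw [norm_mul, RCLike.norm_conj, χ.unit_norm_eq_one, mul_one, Complex.norm_real,
    Real.norm_of_nonneg (hh a)]

theorem sum_Gavg_mul_apply (h : (ZMod q)ˣ → ℝ) (a : (ZMod q)ˣ) :
    ∑ χ : DirichletCharacter ℂ q, Gavg q h χ * χ a = h a := by
  have hn : (Fintype.card (ZMod q)ˣ : ℂ) ≠ 0 := by exact_mod_cast card_units_pos.ne'
  simp_rw [Gavg, div_mul_eq_mul_div, ← sum_div, sum_mul, mul_assoc]
  rw [sum_comm]
  simp_rw [← mul_sum, mul_comm (conj _), DirichletCharacter.sum_apply_mul_conj_apply, mul_ite,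
    mul_zero, sum_ite_eq, mem_univ, if_true]
  field_simp

theorem sum_norm_Gavg_sq (h : (ZMod q)ˣ → ℝ) :
    ∑ χ : DirichletCharacter ℂ q, ‖Gavg q h χ‖ ^ 2 =
      (∑ a, h a ^ 2) / Fintype.card (ZMod q)ˣ := by
  have hconj (χ : DirichletCharacter ℂ q) :
      conj (Gavg q h χ) = (∑ a, (h a : ℂ) * χ a) / Fintype.card (ZMod q)ˣ := by
    rw [Gavg, map_div₀, map_sum, map_natCast]
    simp
  apply Complex.ofReal_injective
  push_cast
  simp_rw [← Complex.mul_conj', hconj, mul_div_assoc', mul_sum, ← sum_div]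
  rw [sum_comm]
  simp_rw [mul_left_comm _ (h _ : ℂ), ← mul_sum, sum_Gavg_mul_apply, sq]

lemma GavgReal_mono {u v : (ZMod q)ˣ → ℝ} (huv : u ≤ v) : GavgReal q u ≤ GavgReal q v := by
  unfold GavgReal
  gcongr with a
  exact huv a

lemma le_sum_norm_Gavg (h : (ZMod q)ˣ → ℝ) (a : (ZMod q)ˣ) :
    h a ≤ ∑ χ : DirichletCharacter ℂ q, ‖Gavg q h χ‖ := by
  calc h a ≤ ‖(h a : ℂ)‖ := by rw [Complex.norm_real]; exact Real.le_norm_self _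
    _ = ‖∑ χ : DirichletCharacter ℂ q, Gavg q h χ * χ a‖ := by rw [sum_Gavg_mul_apply]
    _ ≤ ∑ χ : DirichletCharacter ℂ q, ‖Gavg q h χ‖ := by
      refine (norm_sum_le _ _).trans (sum_le_sum fun χ _ => ?_)
      rw [norm_mul, χ.unit_norm_eq_one, mul_one]

def unitsConv (u v : (ZMod q)ˣ → ℝ) (a : (ZMod q)ˣ) : ℝ :=
  (∑ c, u c * v (c⁻¹ * a)) / Fintype.card (ZMod q)ˣ

lemma unitsConv_nonneg {u v : (ZMod q)ˣ → ℝ} (hu : 0 ≤ u) (hv : 0 ≤ v) :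
    0 ≤ unitsConv u v := fun _ =>
  div_nonneg (sum_nonneg fun c _ => mul_nonneg (hu c) (hv _)) (Nat.cast_nonneg _)

lemma unitsConv_mono_left {u u' v : (ZMod q)ˣ → ℝ} (hu : u ≤ u') (hv : 0 ≤ v) :
    unitsConv u v ≤ unitsConv u' v := fun _ => by
  unfold unitsConv
  gcongr with c
  exacts [hv _, hu c]

theorem Gavg_unitsConv (u v : (ZMod q)ˣ → ℝ) (χ : DirichletCharacter ℂ q) :
    Gavg q (unitsConv u v) χ = Gavg q u χ * Gavg q v χ := by
  have hshift (c : (ZMod q)ˣ) : ∑ a, (v (c⁻¹ * a) : ℂ) * conj (χ a) =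
      conj (χ c) * ∑ d, (v d : ℂ) * conj (χ d) := by
    rw [← Equiv.sum_comp (Equiv.mulLeft c), mul_sum]
    refine sum_congr rfl fun d _ => ?_
    simp only [Equiv.coe_mulLeft, inv_mul_cancel_left, Units.val_mul, map_mul]
    ring
  simp only [Gavg, unitsConv, Complex.ofReal_div, Complex.ofReal_sum, Complex.ofReal_mul,
    Complex.ofReal_natCast, div_mul_eq_mul_div, ← sum_div, sum_mul]
  rw [sum_comm]
  simp_rw [mul_assoc, ← mul_sum, hshift, ← mul_assoc, ← sum_mul]
  ring

lemma Gavg_comp_inv (u : (ZMod q)ˣ → ℝ) (χ : DirichletCharacter ℂ q) :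
    Gavg q (fun a => u a⁻¹) χ = conj (Gavg q u χ) := by
  simp only [Gavg, map_div₀, map_sum, map_mul, Complex.conj_ofReal, map_natCast,
    RingHomCompTriple.comp_apply, RingHom.id_apply]
  congr 1
  rw [← Equiv.sum_comp (Equiv.inv _)]
  simp [DirichletCharacter.conj_apply_unit]

def bohrSet (S : Finset (DirichletCharacter ℂ q)) (ρ : ℝ) : Finset (ZMod q)ˣ :=
  {a | ∀ χ ∈ S, ‖χ a - 1‖ ≤ ρ}

lemma one_mem_bohrSet (S : Finset (DirichletCharacter ℂ q)) {ρ : ℝ} (hρ : 0 ≤ ρ) :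
    1 ∈ bohrSet S ρ := by
  simpa [bohrSet] using fun _ _ => hρ

def normalizedIndicator (B : Finset (ZMod q)ˣ) (a : (ZMod q)ˣ) : ℝ :=
  if a ∈ B then (Fintype.card (ZMod q)ˣ : ℝ) / #B else 0

lemma normalizedIndicator_nonneg (B : Finset (ZMod q)ˣ) : 0 ≤ normalizedIndicator B := by
  intro a
  unfold normalizedIndicator
  split_ifs <;> positivity

lemma Gavg_normalizedIndicator (B : Finset (ZMod q)ˣ) (χ : DirichletCharacter ℂ q) :
    Gavg q (normalizedIndicator B) χ = (∑ b ∈ B, conj (χ b)) / #B := by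
  rcases B.eq_empty_or_nonempty with rfl | hB
  · simp [Gavg, normalizedIndicator]
  have hn : (Fintype.card (ZMod q)ˣ : ℂ) ≠ 0 := by exact_mod_cast card_units_pos.ne'
  have hB' : (#B : ℂ) ≠ 0 := by exact_mod_cast hB.card_pos.ne'
  simp only [Gavg, normalizedIndicator, apply_ite (fun x : ℝ => (x : ℂ)), Complex.ofReal_zero,
    ite_mul, zero_mul, sum_ite_mem, univ_inter, Complex.ofReal_div, Complex.ofReal_natCast,
    ← mul_sum]
  field_simp

lemma norm_Gavg_normalizedIndicator_le_one (B : Finset (ZMod q)ˣ) (χ : DirichletCharacter ℂ q) :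
    ‖Gavg q (normalizedIndicator B) χ‖ ≤ 1 := by
  rw [Gavg_normalizedIndicator, norm_div, Complex.norm_natCast]
  refine div_le_one_of_le₀ ((norm_sum_le _ _).trans ?_) (Nat.cast_nonneg _)
  simp [χ.unit_norm_eq_one]

lemma Gavg_normalizedIndicator_one {B : Finset (ZMod q)ˣ} (hB : B.Nonempty) :
    Gavg q (normalizedIndicator B) 1 = 1 := by
  have hB' : (#B : ℂ) ≠ 0 := by exact_mod_cast hB.card_pos.ne'
  simp [Gavg_normalizedIndicator, hB']

lemma one_sub_two_mul_le_norm_Gavg_normalizedIndicator_sq {S : Finset (DirichletCharacter ℂ q)}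
    {ρ : ℝ} (hρ : 0 ≤ ρ) {χ : DirichletCharacter ℂ q} (hχ : χ ∈ S) :
    1 - 2 * ρ ≤ ‖Gavg q (normalizedIndicator (bohrSet S ρ)) χ‖ ^ 2 := by
  set B := bohrSet S ρ
  have hB : (0 : ℝ) < #B := by exact_mod_cast (card_pos.mpr ⟨1, one_mem_bohrSet S hρ⟩)
  have hclose : ‖1 - Gavg q (normalizedIndicator B) χ‖ ≤ ρ := by
    rw [Gavg_normalizedIndicator, one_sub_div (by exact_mod_cast hB.ne'), norm_div,
      Complex.norm_natCast, div_le_iff₀ hB, Finset.cast_card, ← sum_sub_distrib, mul_comm,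
      ← nsmul_eq_mul, ← sum_const]
    refine (norm_sum_le _ _).trans (sum_le_sum fun b hb => ?_)
    rw [← map_one (starRingEnd ℂ), ← map_sub, Complex.norm_conj, norm_sub_rev]
    exact (mem_filter.mp hb).2 χ hχ
  have hnorm : 1 - ρ ≤ ‖Gavg q (normalizedIndicator B) χ‖ := by
    linarith [norm_sub_norm_le (1 : ℂ) (Gavg q (normalizedIndicator B) χ), norm_one (α := ℂ)]
  rcases le_total 0 (1 - ρ) with h | h
  · nlinarith [pow_le_pow_left₀ h hnorm 2]
  · nlinarith [sq_nonneg ‖Gavg q (normalizedIndicator B) χ‖]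

lemma sum_norm_Gavg_normalizedIndicator_sq (B : Finset (ZMod q)ˣ) :
    ∑ χ : DirichletCharacter ℂ q, ‖Gavg q (normalizedIndicator B) χ‖ ^ 2 =
      Fintype.card (ZMod q)ˣ / #B := by
  rcases B.eq_empty_or_nonempty with rfl | hB
  · simp [Gavg, normalizedIndicator]
  have hB' : (#B : ℝ) ≠ 0 := by exact_mod_cast hB.card_pos.ne'
  rw [sum_norm_Gavg_sq]
  simp only [normalizedIndicator, ite_pow, ne_eq, OfNat.ofNat_ne_zero, not_false_eq_true,
    zero_pow, sum_ite_mem, univ_inter, sum_const, nsmul_eq_mul]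
  field_simp

def bohrKernel (B : Finset (ZMod q)ˣ) : (ZMod q)ˣ → ℝ :=
  unitsConv (fun a => normalizedIndicator B a⁻¹) (normalizedIndicator B)

lemma bohrKernel_nonneg (B : Finset (ZMod q)ˣ) : 0 ≤ bohrKernel B :=
  unitsConv_nonneg (fun a => normalizedIndicator_nonneg B a⁻¹) (normalizedIndicator_nonneg B)

lemma Gavg_bohrKernel (B : Finset (ZMod q)ˣ) (χ : DirichletCharacter ℂ q) :
    Gavg q (bohrKernel B) χ = (‖Gavg q (normalizedIndicator B) χ‖ ^ 2 : ℝ) := by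
  rw [bohrKernel, Gavg_unitsConv, Gavg_comp_inv, Complex.conj_mul']
  push_cast; rfl

theorem card_units_le_mul_card_bohrSet {ι : Type*} (S : Finset (DirichletCharacter ℂ q)) {ρ : ℝ}
    (cell : ℂ → ι) (t : Finset ι) (hcell_mem : ∀ z : ℂ, ‖z‖ = 1 → cell z ∈ t)
    (hcell : ∀ z w : ℂ, ‖z‖ = 1 → ‖w‖ = 1 → cell z = cell w → ‖z - w‖ ≤ ρ) :
    Fintype.card (ZMod q)ˣ ≤ #t ^ #S * #(bohrSet S ρ) := by
  -- Each fibre of `Φ` lies in a translate `a₀ • bohrSet S ρ`.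
  let Φ : (ZMod q)ˣ → S → ι := fun a χ => cell (χ.1 a)
  have hΦ : ∀ a ∈ (univ : Finset (ZMod q)ˣ), Φ a ∈ Fintype.piFinset fun _ : S => t :=
    fun a _ => Fintype.mem_piFinset.mpr fun χ => hcell_mem _ (χ.1.unit_norm_eq_one a)
  have hfiber : ∀ y ∈ Fintype.piFinset fun _ : S => t, #{a | Φ a = y} ≤ #(bohrSet S ρ) := by
    intro y _
    rcases Finset.eq_empty_or_nonempty {a | Φ a = y} with h | ⟨a₀, ha₀⟩
    · simp [h]
    refine card_le_card_of_injOn (· * a₀⁻¹) (fun a ha => ?_) (fun a _ b _ h => mul_right_cancel h)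
    have hcell_eq : Φ a = Φ a₀ := (mem_filter.mp ha).2.trans (mem_filter.mp ha₀).2.symm
    refine mem_filter.mpr ⟨mem_univ _, fun χ hχ => ?_⟩
    have h := hcell _ _ (χ.unit_norm_eq_one a) (χ.unit_norm_eq_one a₀) (congrFun hcell_eq ⟨χ, hχ⟩)
    calc ‖χ ↑(a * a₀⁻¹) - 1‖ = ‖χ a - χ a₀‖ * ‖χ ↑a₀⁻¹‖ := by
          rw [← norm_mul, sub_mul, ← map_mul, ← map_mul, ← Units.val_mul, ← Units.val_mul,
            mul_inv_cancel, Units.val_one, map_one]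
      _ ≤ ρ := by rw [χ.unit_norm_eq_one, mul_one]; exact h
  simpa [mul_comm] using card_le_mul_card_image_of_maps_to hΦ _ hfiber

theorem card_units_le_card_bohrSet (S : Finset (DirichletCharacter ℂ q)) {ρ : ℝ} (hρ : 0 < ρ) :
    Fintype.card (ZMod q)ˣ ≤ (2 * ⌈Real.pi / ρ⌉₊ + 1) ^ #S * #(bohrSet S ρ) := by
  set m := ⌈Real.pi / ρ⌉₊
  have hcard : #(Icc (-m : ℤ) m) = 2 * m + 1 := by rw [Int.card_Icc]; omega
  rw [← hcard]
  refine card_units_le_mul_card_bohrSet S (fun z => ⌊z.arg / ρ⌋) _ (fun z _ => ?_) ?_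
  · have hπm : Real.pi / ρ ≤ m := Nat.le_ceil _
    have h1 : -Real.pi / ρ < z.arg / ρ := div_lt_div_of_pos_right (Complex.neg_pi_lt_arg z) hρ
    have h2 : z.arg / ρ ≤ Real.pi / ρ := div_le_div_of_nonneg_right (Complex.arg_le_pi z) hρ.le
    rw [mem_Icc, Int.le_floor, Int.floor_le_iff]
    push_cast
    constructor <;> linarith [neg_div ρ Real.pi]
  · intro z w hz hw h
    refine (Complex.norm_sub_le_abs_arg_sub hz hw).trans ?_
    have := Int.abs_sub_lt_one_of_floor_eq_floor h
    rw [← sub_div, abs_div, abs_of_pos hρ, div_lt_one hρ] at this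
    exact this.le

lemma card_units_div_card_bohrSet_le (S : Finset (DirichletCharacter ℂ q)) {ρ : ℝ} (hρ : 0 < ρ) :
    (Fintype.card (ZMod q)ˣ : ℝ) / #(bohrSet S ρ) ≤ (2 * ⌈Real.pi / ρ⌉₊ + 1) ^ #S := by
  have hB : (0 : ℝ) < #(bohrSet S ρ) := by
    exact_mod_cast card_pos.mpr ⟨1, one_mem_bohrSet S hρ.le⟩
  rw [div_le_iff₀ hB]
  exact_mod_cast card_units_le_card_bohrSet S hρ

theorem unitsConv_bohrKernel_le {V : (ZMod q)ˣ → ℝ} {θ : ℝ} (hθ : 0 ≤ θ)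
    (hV : ∀ χ : DirichletCharacter ℂ q, χ ≠ 1 → ‖Gavg q V χ‖ ≤ θ) (B : Finset (ZMod q)ˣ)
    (a : (ZMod q)ˣ) :
    unitsConv V (bohrKernel B) a ≤ |GavgReal q V| + θ * (Fintype.card (ZMod q)ˣ / #B) := by
  set w := fun χ : DirichletCharacter ℂ q => ‖Gavg q (normalizedIndicator B) χ‖ ^ 2
  have hterm (χ : DirichletCharacter ℂ q) :
      ‖Gavg q (unitsConv V (bohrKernel B)) χ‖ ≤
        (if χ = 1 then |GavgReal q V| else 0) + θ * w χ := by
    have hw : 0 ≤ w χ := sq_nonneg _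
    rw [Gavg_unitsConv, Gavg_bohrKernel, norm_mul, Complex.norm_real, Real.norm_of_nonneg hw]
    split_ifs with h
    · subst h
      rw [Gavg_one, Complex.norm_real, Real.norm_eq_abs]
      have : w 1 ≤ 1 := pow_le_one₀ (norm_nonneg _) (norm_Gavg_normalizedIndicator_le_one B 1)
      nlinarith [abs_nonneg (GavgReal q V)]
    · rw [zero_add]
      exact mul_le_mul_of_nonneg_right (hV χ h) hw
  calc unitsConv V (bohrKernel B) a ≤ ∑ χ, ‖Gavg q (unitsConv V (bohrKernel B)) χ‖ :=
        le_sum_norm_Gavg _ a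
    _ ≤ ∑ χ, ((if χ = 1 then |GavgReal q V| else 0) + θ * w χ) := sum_le_sum fun χ _ => hterm χ
    _ = |GavgReal q V| + θ * (Fintype.card (ZMod q)ˣ / #B) := by
        rw [sum_add_distrib, sum_ite_eq', if_pos (mem_univ _), ← mul_sum,
          sum_norm_Gavg_normalizedIndicator_sq]

theorem unitsConv_bohrKernel_bohrSet_le {V : (ZMod q)ˣ → ℝ} {η θ ρ : ℝ}
    (hV : |GavgReal q V - 1| ≤ η) (hVχ : ∀ χ : DirichletCharacter ℂ q, χ ≠ 1 → ‖Gavg q V χ‖ ≤ θ)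
    (hθ : 0 ≤ θ) (S : Finset (DirichletCharacter ℂ q)) (hρ : 0 < ρ) (a : (ZMod q)ˣ) :
    unitsConv V (bohrKernel (bohrSet S ρ)) a ≤ 1 + η + θ * (2 * ⌈Real.pi / ρ⌉₊ + 1) ^ #S := by
  refine (unitsConv_bohrKernel_le hθ hVχ _ a).trans ?_
  gcongr
  · exact abs_le.mpr ⟨by linarith [(abs_le.mp hV).1], by linarith [(abs_le.mp hV).2]⟩
  · exact card_units_div_card_bohrSet_le S hρ

theorem abs_sum_mul_cosetInd_le {H : Subgroup (ZMod q)ˣ} (hH : H.index = 2) (b : (ZMod q)ˣ)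
    {h : (ZMod q)ˣ → ℝ} {δ : ℝ} (hh : ∀ χ, ‖Gavg q h χ‖ ≤ δ) :
    |(∑ a, h a * cosetInd q H b a) / Fintype.card (ZMod q)ˣ| ≤ δ := by
  set χH := indexTwoCharacter H hH
  have hsplit : (((∑ a, h a * cosetInd q H b a) / Fintype.card (ZMod q)ˣ : ℝ) : ℂ) =
      (Gavg q h 1 + χH b * Gavg q h χH) / 2 := by
    have hterm (a : (ZMod q)ˣ) : (h a : ℂ) * cosetInd q H b a =
        h a / 2 + χH b / 2 * (h a * conj (χH a)) := by
      rw [cosetInd_eq hH]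
      ring
    simp only [Gavg, Complex.ofReal_div, Complex.ofReal_sum, Complex.ofReal_mul,
      Complex.ofReal_natCast, hterm, sum_add_distrib, ← sum_div, ← mul_sum,
      MulChar.one_apply_coe, map_one, mul_one]
    ring
  rw [← Real.norm_eq_abs, ← Complex.norm_real, hsplit, norm_div, Complex.norm_ofNat]
  have hχH : ‖χH b‖ ≤ 1 := DirichletCharacter.norm_le_one χH _
  calc ‖Gavg q h 1 + χH b * Gavg q h χH‖ / 2 ≤ (δ + 1 * δ) / 2 := by
        gcongr
        refine (norm_add_le _ _).trans (add_le_add (hh 1) ?_)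
        rw [norm_mul]
        exact mul_le_mul hχH (hh χH) (norm_nonneg _) zero_le_one
    _ = δ := by ring

theorem exists_dense_model_units {F V : (ZMod q)ˣ → ℝ} (hF : 0 ≤ F) (hFV : F ≤ V)
    {η θ δ : ℝ} (hη : η ≤ 1) (hV : |GavgReal q V - 1| ≤ η)
    (hVχ : ∀ χ : DirichletCharacter ℂ q, χ ≠ 1 → ‖Gavg q V χ‖ ≤ θ) (hθ : 0 ≤ θ) (hδ : 0 < δ) :
    ∃ g : (ZMod q)ˣ → ℝ,
      (∀ a, 0 ≤ g a) ∧
      (∀ a, g a ≤ 1 + η + θ * (2 * ⌈4 * Real.pi / δ⌉₊ + 1) ^ {χ | δ ≤ ‖Gavg q F χ‖}.ncard) ∧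
      (∀ χ, ‖Gavg q F χ - Gavg q g χ‖ ≤ δ) ∧
      (∀ χ, ‖Gavg q g χ‖ ≤ ‖Gavg q F χ‖ ∧ ‖Gavg q F χ - Gavg q g χ‖ ≤ ‖Gavg q F χ‖) ∧
      GavgReal q g = GavgReal q F ∧
      (∀ H : Subgroup (ZMod q)ˣ, H.index = 2 → ∀ b,
        |(∑ a, F a * cosetInd q H b a) / Fintype.card (ZMod q)ˣ -
          (∑ a, g a * cosetInd q H b a) / Fintype.card (ZMod q)ˣ| ≤ δ) := by
  set S : Finset (DirichletCharacter ℂ q) := {χ | δ ≤ ‖Gavg q F χ‖}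
  set B := bohrSet S (δ / 4)
  set w := fun χ : DirichletCharacter ℂ q => ‖Gavg q (normalizedIndicator B) χ‖ ^ 2
  set g := unitsConv F (bohrKernel B)
  have hĝ (χ) : Gavg q g χ = w χ * Gavg q F χ := by
    rw [Gavg_unitsConv, Gavg_bohrKernel, mul_comm]
  have hw (χ) : 0 ≤ w χ ∧ w χ ≤ 1 :=
    ⟨sq_nonneg _, pow_le_one₀ (norm_nonneg _) (norm_Gavg_normalizedIndicator_le_one B χ)⟩
  have hwS {χ} (hχ : χ ∈ S) : 1 - 2 * (δ / 4) ≤ w χ :=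
    one_sub_two_mul_le_norm_Gavg_normalizedIndicator_sq (by positivity) hχ
  have hdiff (χ) : ‖Gavg q F χ - Gavg q g χ‖ = (1 - w χ) * ‖Gavg q F χ‖ := by
    rw [hĝ, ← one_sub_mul, norm_mul, ← Complex.ofReal_one, ← Complex.ofReal_sub,
      Complex.norm_real, Real.norm_of_nonneg (by linarith [hw χ])]
  have hF_le (χ) : ‖Gavg q F χ‖ ≤ 1 + η := by
    linarith [norm_Gavg_le hF χ, GavgReal_mono hFV, (abs_le.mp hV).2]
  have hii (χ) : ‖Gavg q F χ - Gavg q g χ‖ ≤ δ := by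
    rw [hdiff]
    by_cases hχ : χ ∈ S
    · nlinarith [hwS hχ, hF_le χ, hw χ, norm_nonneg (Gavg q F χ)]
    · have : ‖Gavg q F χ‖ < δ := by simpa [S] using hχ
      nlinarith [hw χ, norm_nonneg (Gavg q F χ)]
  refine ⟨g, unitsConv_nonneg hF (bohrKernel_nonneg B), fun a => ?_, hii, fun χ => ⟨?_, ?_⟩, ?_,
    fun H hH b => ?_⟩
  · have hS : {χ | δ ≤ ‖Gavg q F χ‖}.ncard = #S := by
      rw [← Set.ncard_coe_finset]
      simp [S]
    have hρ : Real.pi / (δ / 4) = 4 * Real.pi / δ := by field_simp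
    rw [hS, ← hρ]
    exact (unitsConv_mono_left hFV (bohrKernel_nonneg B) a).trans
      (unitsConv_bohrKernel_bohrSet_le hV hVχ hθ S (by positivity) a)
  · rw [hĝ, norm_mul, Complex.norm_real, Real.norm_of_nonneg (hw χ).1]
    exact mul_le_of_le_one_left (norm_nonneg _) (hw χ).2
  · rw [hdiff]
    exact mul_le_of_le_one_left (norm_nonneg _) (by linarith [hw χ])
  · have hw1 : w 1 = 1 := by
      have hB : B.Nonempty := ⟨1, one_mem_bohrSet S (by positivity)⟩
      simp only [w, Gavg_normalizedIndicator_one hB, norm_one, one_pow]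
    have := hĝ 1
    rwa [Gavg_one, Gavg_one, hw1, Complex.ofReal_one, one_mul, Complex.ofReal_inj] at this
  · rw [← sub_div, ← sum_sub_distrib]
    simp_rw [← sub_mul]
    exact abs_sum_mul_cosetInd_le (h := F - g) hH b fun χ => by rw [Gavg_sub]; exact hii χ

def residueDensity (N : ℝ) (f : ℕ → ℝ) (a : (ZMod q)ˣ) : ℝ :=
  Fintype.card (ZMod q)ˣ / #(Iqset q N) * ∑ n ∈ Iqset q N with residueUnit q n = a, f n

lemma residueDensity_nonneg {N : ℝ} {f : ℕ → ℝ} (hf : ∀ n ∈ Iqset q N, 0 ≤ f n) :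
    0 ≤ residueDensity (q := q) N f := fun _ =>
  mul_nonneg (by positivity) (sum_nonneg fun n hn => hf n (mem_filter.mp hn).1)

lemma residueDensity_mono {N : ℝ} {f f' : ℕ → ℝ} (hf : ∀ n ∈ Iqset q N, f n ≤ f' n) :
    residueDensity (q := q) N f ≤ residueDensity N f' := fun _ => by
  unfold residueDensity
  gcongr with n hn
  exact hf n (mem_filter.mp hn).1

theorem sum_Iqset_div_card_eq (N : ℝ) (f : ℕ → ℝ) (φ : (ZMod q)ˣ → ℂ) :
    (∑ n ∈ Iqset q N, (f n : ℂ) * φ (residueUnit q n)) / #(Iqset q N) =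
      (∑ a, (residueDensity N f a : ℂ) * φ a) / Fintype.card (ZMod q)ˣ := by
  have hn : (Fintype.card (ZMod q)ˣ : ℂ) ≠ 0 := by exact_mod_cast card_units_pos.ne'
  simp only [residueDensity, Complex.ofReal_mul, Complex.ofReal_div, Complex.ofReal_natCast,
    Complex.ofReal_sum, mul_assoc, ← mul_sum, sum_mul]
  rw [← sum_fiberwise (Iqset q N) (residueUnit q)]
  have hfiber (a : (ZMod q)ˣ) :
      ∑ n ∈ Iqset q N with residueUnit q n = a, (f n : ℂ) * φ (residueUnit q n) =
        ∑ n ∈ Iqset q N with residueUnit q n = a, (f n : ℂ) * φ a :=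
    sum_congr rfl fun n hn => by rw [(mem_filter.mp hn).2]
  simp only [hfiber]
  field_simp

lemma Favg_eq_Gavg_residueDensity (N : ℝ) (f : ℕ → ℝ) (χ : DirichletCharacter ℂ q) :
    Favg q N f χ = Gavg q (residueDensity N f) χ := by
  rw [Favg, Gavg, ← sum_Iqset_div_card_eq]
  congr 1
  refine sum_congr rfl fun n hn => ?_
  rw [residueUnit_of_mem_Iqset hn]

lemma FavgReal_eq_GavgReal_residueDensity (N : ℝ) (f : ℕ → ℝ) :
    FavgReal q N f = GavgReal q (residueDensity N f) := by
  have := sum_Iqset_div_card_eq (q := q) N f 1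
  simp only [Pi.one_apply, mul_one] at this
  exact_mod_cast this

lemma sum_mul_cosetIndNat_eq (N : ℝ) (f : ℕ → ℝ) (H : Subgroup (ZMod q)ˣ) (b : (ZMod q)ˣ) :
    (∑ n ∈ Iqset q N, f n * cosetIndNat q H b n) / #(Iqset q N) =
      (∑ a, residueDensity N f a * cosetInd q H b a) / Fintype.card (ZMod q)ˣ := by
  have hind {n} (hn : n ∈ Iqset q N) : cosetIndNat q H b n = cosetInd q H b (residueUnit q n) := by
    have hu : ∀ u : (ZMod q)ˣ, (u : ZMod q) = n ↔ u = residueUnit q n := fun u => by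
      rw [← residueUnit_of_mem_Iqset hn, Units.val_inj]
    simp [cosetIndNat, cosetInd, hu]
  have := sum_Iqset_div_card_eq N f (fun a => cosetInd q H b a)
  rw [sum_congr rfl fun n hn => by rw [hind hn]]
  apply Complex.ofReal_injective
  push_cast
  exact this

def densityThreshold (r C ε x : ℝ) : ℝ :=
  (10 * C * r * Real.log (Real.log x) / (ε * Real.log x)) ^ (1 / r)

section DensityThreshold

variable {r C ε x δ : ℝ}

lemma densityThreshold_base_pos (hC : 0 < C) (hr : 0 < r) (hε : 0 < ε)
    (hL : 1 < Real.log x) : 0 < 10 * C * r * Real.log (Real.log x) / (ε * Real.log x) := by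
  have hℓ : 0 < Real.log (Real.log x) := Real.log_pos hL
  have : 0 < Real.log x := by linarith
  positivity

lemma lt_rpow_of_densityThreshold_lt (hC : 0 < C) (hr : 0 < r) (hε : 0 < ε)
    (hL : 1 < Real.log x) (hδ : densityThreshold r C ε x < δ) :
    0 < δ ∧ 10 * C * r * Real.log (Real.log x) / (ε * Real.log x) < δ ^ r := by
  have hX := densityThreshold_base_pos hC hr hε hL
  have hδ0 : 0 < δ := (Real.rpow_pos_of_pos hX _).trans hδ
  unfold densityThreshold at hδ
  rw [one_div, Real.rpow_inv_lt_iff_of_pos hX.le hδ0.le hr] at hδ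
  exact ⟨hδ0, hδ⟩

lemma natCast_mul_log_log_le (hC : 0 < C) (hr : 1 < r) (hε : 0 < ε) (hL : 1 < Real.log x)
    (hδ : densityThreshold r C ε x < δ) {k : ℕ} (hk : (k : ℝ) ≤ C * δ ^ (-r)) :
    k * Real.log (Real.log x) ≤ ε * Real.log x / 10 := by
  have hr0 : 0 < r := by linarith
  have hℓ : 0 < Real.log (Real.log x) := Real.log_pos hL
  obtain ⟨hδ0, hXδ⟩ := lt_rpow_of_densityThreshold_lt hC hr0 hε hL hδ
  have hX := densityThreshold_base_pos hC hr0 hε hL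
  calc k * Real.log (Real.log x)
      ≤ C / (10 * C * r * Real.log (Real.log x) / (ε * Real.log x)) * Real.log (Real.log x) := by
        refine mul_le_mul_of_nonneg_right (hk.trans ?_) hℓ.le
        rw [Real.rpow_neg hδ0.le, ← div_eq_mul_inv]
        gcongr
    _ = ε * Real.log x / (10 * r) := by field_simp
    _ ≤ ε * Real.log x / 10 := by gcongr; linarith

lemma one_div_log_lt_of_densityThreshold_lt (hC : 1 ≤ C) (hr : 1 < r) (hε : 0 < ε)
    (hε1 : ε < 1) (hL : Real.exp 1 ≤ Real.log x) (hδ : densityThreshold r C ε x < δ)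
    (hδ1 : δ ≤ 1) : 1 / Real.log x < δ := by
  have hL0 : 0 < Real.log x := (Real.exp_pos 1).trans_le hL
  have hℓ : 1 ≤ Real.log (Real.log x) := (Real.le_log_iff_exp_le hL0).mpr hL
  have hL1 : 1 < Real.log x := by linarith [Real.add_one_le_exp 1]
  obtain ⟨hδ0, hXδ⟩ := lt_rpow_of_densityThreshold_lt (by linarith) (by linarith) hε hL1 hδ
  have hX : 1 / Real.log x ≤ 10 * C * r * Real.log (Real.log x) / (ε * Real.log x) := by
    have hCr : 1 ≤ C * r := by nlinarith
    have hε' : ε ≤ 10 * C * r * Real.log (Real.log x) := by nlinarith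
    rw [div_le_div_iff₀ hL0 (by positivity)]
    nlinarith
  have hδr : δ ^ r ≤ δ := by
    simpa using Real.rpow_le_rpow_of_exponent_ge hδ0 hδ1 hr.le
  linarith

lemma two_mul_ceil_add_one_le_sq {δ L : ℝ} (hδ : 1 / L < δ) (hδ1 : δ < 1 / 10) (hL : 26 ≤ L) :
    (2 * ⌈4 * Real.pi / δ⌉₊ + 1 : ℝ) ≤ L ^ 2 := by
  have hL0 : 0 < L := by linarith
  have hδ0 : 0 < δ := (one_div_pos.mpr hL0).trans hδ
  have h1 : (⌈4 * Real.pi / δ⌉₊ : ℝ) < 4 * Real.pi / δ + 1 := Nat.ceil_lt_add_one (by positivity)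
  have h2 : 2 * (4 * Real.pi / δ) + 3 ≤ 26 / δ := by
    rw [mul_div_assoc', div_add' _ _ _ hδ0.ne', div_le_div_iff_of_pos_right hδ0]
    linarith [Real.pi_lt_d2]
  have h3 : 26 / δ ≤ 26 * L := by
    rw [div_lt_iff₀ hL0] at hδ
    rw [div_le_iff₀ hδ0]
    nlinarith
  nlinarith

theorem pow_card_cells_le_rpow (hC : 1 ≤ C) (hr : 1 < r) (hε : 0 < ε) (hε1 : ε < 1)
    (hx : Real.exp (Real.exp 5) ≤ x) (hδ : densityThreshold r C ε x < δ) (hδ1 : δ < 1 / 10)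
    {k : ℕ} (hk : (k : ℝ) ≤ C * δ ^ (-r)) :
    (2 * ⌈4 * Real.pi / δ⌉₊ + 1 : ℝ) ^ k ≤ x ^ (ε / 2) := by
  have hx0 : 0 < x := (Real.exp_pos _).trans_le hx
  have hL : Real.exp 5 ≤ Real.log x := (Real.le_log_iff_exp_le hx0).mpr hx
  have hL0 : 0 < Real.log x := (Real.exp_pos 5).trans_le hL
  have hL26 : 26 ≤ Real.log x := by
    have : (2.7 : ℝ) ^ 5 ≤ Real.exp 1 ^ 5 :=
      pow_le_pow_left₀ (by norm_num) (by linarith [Real.exp_one_gt_d9]) 5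
    rw [← Real.exp_nat_mul] at this
    norm_num at this
    linarith
  have hL1 : Real.exp 1 ≤ Real.log x := (Real.exp_le_exp.mpr (by norm_num)).trans hL
  have hkℓ := natCast_mul_log_log_le (by linarith) hr hε (by linarith) hδ hk
  have hcells := two_mul_ceil_add_one_le_sq
    (one_div_log_lt_of_densityThreshold_lt hC hr hε hε1 hL1 hδ (by linarith)) hδ1 hL26
  calc (2 * ⌈4 * Real.pi / δ⌉₊ + 1 : ℝ) ^ k ≤ (Real.log x ^ 2) ^ k := by gcongr
    _ = Real.exp (2 * k * Real.log (Real.log x)) := by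
      rw [← pow_mul, ← Real.exp_log (pow_pos hL0 _), Real.log_pow]
      push_cast
      ring_nf
    _ ≤ Real.exp (ε / 2 * Real.log x) := Real.exp_le_exp.mpr (by nlinarith)
    _ = x ^ (ε / 2) := by rw [Real.rpow_def_of_pos hx0, mul_comm]

end DensityThreshold

/-- **A multiplicative dense model theorem.** -/
theorem dense_model :
    ∀ r C : ℝ, 1 < r → 1 ≤ C →
      ∃ C' : ℝ, 0 < C' ∧
        ∀ η ε : ℝ, 0 < η → η < 1 → 0 < ε → ε < 1 →
          ∃ q₀ : ℕ,
            ∀ (q : ℕ) [NeZero q], q₀ ≤ q →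
              ∀ N : ℝ, 2 ≤ N →
                ∀ δ : ℝ,
                  ((10 * C * r * Real.log (Real.log (q : ℝ))) / (ε * Real.log (q : ℝ))) ^ (1 / r)
                      < δ →
                  δ < 1 / 10 →
                  ∀ f ν : ℕ → ℝ,
                    (∀ n ∈ Iqset q N, 0 ≤ f n) →
                    -- (A1): pseudorandom majorant
                    (∀ n ∈ Iqset q N, 0 ≤ ν n) →
                    (∀ n ∈ Iqset q N, f n ≤ ν n) →
                    |FavgReal q N ν - 1| ≤ η →
                    (∀ χ : DirichletCharacter ℂ q, χ ≠ 1 →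
                      ‖Favg q N ν χ‖ ≤ (q : ℝ) ^ (-ε)) →
                    -- (A2): few large Fourier coefficients
                    ((Set.ncard {χ : DirichletCharacter ℂ q | δ ≤ ‖Favg q N f χ‖} : ℝ)
                        ≤ C * δ ^ (-r)) →
                    ∃ g : (ZMod q)ˣ → ℝ,
                      (∀ a : (ZMod q)ˣ, 0 ≤ g a) ∧
                      -- (i)
                      (∀ a : (ZMod q)ˣ, g a ≤ 1 + η + C' * (q : ℝ) ^ (-(ε / 2))) ∧
                      -- (ii)
                      (∀ χ : DirichletCharacter ℂ q, ‖Favg q N f χ - Gavg q g χ‖ ≤ δ) ∧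
                      -- (iii)
                      (∀ χ : DirichletCharacter ℂ q,
                        ‖Gavg q g χ‖ ≤ ‖Favg q N f χ‖ ∧
                        ‖Favg q N f χ - Gavg q g χ‖ ≤ ‖Favg q N f χ‖) ∧
                      -- (iv)
                      GavgReal q g = FavgReal q N f ∧
                      -- (v)
                      (∀ (H : Subgroup ((ZMod q)ˣ)), H.index = 2 →
                        ∀ b : (ZMod q)ˣ,
                          |(∑ n ∈ Iqset q N, f n * cosetIndNat q H b n) / ((Iqset q N).card : ℝ) -
                            (∑ a : (ZMod q)ˣ, g a * cosetInd q H b a) /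
                              (Fintype.card ((ZMod q)ˣ) : ℝ)| ≤ C' * δ) := by
  intro r C hr hC
  refine ⟨1, one_pos, fun η ε _ hη1 hε0 hε1 => ⟨⌈Real.exp (Real.exp 5)⌉₊, ?_⟩⟩
  intro q _ hq N _ δ hδl hδu f ν hf0 _ hfν hν1 hνχ hA2
  have hq' : Real.exp (Real.exp 5) ≤ q := Nat.ceil_le.mp hq
  have hq0 : (0 : ℝ) < q := (Real.exp_pos _).trans_le hq'
  have hlog : 1 < Real.log q :=
    (Real.one_lt_exp_iff.mpr (by norm_num)).trans_le ((Real.le_log_iff_exp_le hq0).mpr hq')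
  have hδ0 : 0 < δ := (lt_rpow_of_densityThreshold_lt (by linarith) (by linarith) hε0 hlog hδl).1
  simp only [Favg_eq_Gavg_residueDensity, FavgReal_eq_GavgReal_residueDensity,
    sum_mul_cosetIndNat_eq] at hν1 hνχ hA2 ⊢
  obtain ⟨g, hg0, hgle, hii, hiii, hiv, hv⟩ := exists_dense_model_units
    (residueDensity_nonneg hf0) (residueDensity_mono hfν) hη1.le hν1 hνχ (by positivity) hδ0
  refine ⟨g, hg0, fun a => (hgle a).trans ?_, hii, hiii, hiv, by simpa using hv⟩
  calc 1 + η + (q : ℝ) ^ (-ε) * (2 * ⌈4 * Real.pi / δ⌉₊ + 1) ^ _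
      ≤ 1 + η + (q : ℝ) ^ (-ε) * (q : ℝ) ^ (ε / 2) := by
        gcongr
        exact pow_card_cells_le_rpow hC hr hε0 hε1 hq' hδl hδu hA2
    _ = 1 + η + 1 * (q : ℝ) ^ (-(ε / 2)) := by rw [← Real.rpow_add hq0]; ring_nf
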